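/- arXiv:2306.08897 — 3 statements merged into one kernel-verified Lean document; each statement's English description precedes it below -/
import Mathlib

section
/- Let X be a continuum. Every nonblocker of singletons of X is a shore set of X. -/
/-! A point `x ∉ A` has an order arc `α` from `{x}` to `X` whose members avoid `A` before time
`1`. Since `α` is continuous in the Hausdorff metric and `α 1 = X`, the subcontinua `α t` with
`t < 1` close to `1` are Hausdorff-close to `X`. -/

open Set Metric TopologicalSpace unitInterval

variable {X : Type*} [MetricSpace X] [CompactSpace X] [ConnectedSpace X] [Nonempty X]

/-- An order arc in the hyperspace `C(X)`: a continuous map into nonempty compact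
(connected-valued) subsets, strictly increasing with respect to inclusion. -/
def IsOrderArc {X : Type*} [MetricSpace X] (α : unitInterval → NonemptyCompacts X) : Prop :=
  Continuous α ∧ (∀ t, IsConnected (α t : Set X)) ∧
    ∀ s t : unitInterval, s < t → (α s : Set X) ⊂ (α t : Set X)

/-- `B` blocks `A`: every continuous path in `2^X` from `A` to `X` meets `B`
at some time `t < 1`. -/
def Blocks {X : Type*} [MetricSpace X] (B A : Set X) : Prop :=
  ∀ γ : unitInterval → NonemptyCompacts X, Continuous γ →
    (γ 0 : Set X) = A → (γ 1 : Set X) = univ →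
    ∃ t : unitInterval, t < 1 ∧ ((γ t : Set X) ∩ B).Nonempty

/-- The blocked set of a point `x`: all points `y` such that `{x}` blocks `{y}`. -/
def BlockedSet {X : Type*} [MetricSpace X] (x : X) : Set X :=
  {y | Blocks {x} {y}}

/-- A nonblocker of singletons: a nonempty proper closed set `A` such that every
point outside `A` admits an order arc from its singleton to `X` avoiding `A`
at all times `t < 1`. -/
def IsNonBlocker {X : Type*} [MetricSpace X] (A : Set X) : Prop :=
  IsClosed A ∧ A.Nonempty ∧ A ≠ univ ∧
    ∀ x ∉ A, ∃ α : unitInterval → NonemptyCompacts X, IsOrderArc α ∧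
      (α 0 : Set X) = {x} ∧ (α 1 : Set X) = univ ∧
      ∀ t : unitInterval, t < 1 → (α t : Set X) ∩ A = ∅

open Classical in
/-- `π(x)`: the intersection of all nonblockers of singletons containing `x`,
or `X` if no such nonblocker exists. -/
noncomputable def piSet {X : Type*} [MetricSpace X] (x : X) : Set X :=
  if ∃ A : Set X, IsNonBlocker A ∧ x ∈ A then ⋂₀ {A : Set X | IsNonBlocker A ∧ x ∈ A}
  else univ

/-- The Kelley property of a continuum. -/
def KelleyContinuum (X : Type*) [MetricSpace X] : Prop :=
  ∀ ε > (0 : ℝ), ∃ δ > (0 : ℝ), ∀ p q : X, dist p q < δ →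
    ∀ A : Set X, IsCompact A → IsConnected A → p ∈ A →
      ∃ B : Set X, IsCompact B ∧ IsConnected B ∧ q ∈ B ∧ hausdorffDist A B < ε

/-- A shore set: a nonempty proper closed set which can be avoided by subcontinua
arbitrarily close (in Hausdorff distance) to the whole space. -/
def IsShoreSet {X : Type*} [MetricSpace X] (A : Set X) : Prop :=
  IsClosed A ∧ A.Nonempty ∧ A ≠ univ ∧
    ∀ ε > (0 : ℝ), ∃ B : Set X, IsCompact B ∧ IsConnected B ∧
      hausdorffDist B (univ : Set X) < ε ∧ B ∩ A = ∅

/-- A shore point: a point whose singleton is a shore set. -/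
def IsShorePoint {X : Type*} [MetricSpace X] (x : X) : Prop :=
  IsShoreSet ({x} : Set X)

/-- Two points of `S` are joined by an arc lying in `S` (or are equal). -/
def ArcIn {X : Type*} [MetricSpace X] (S : Set X) (x y : X) : Prop :=
  x = y ∨ ∃ f : unitInterval → X, Continuous f ∧ Function.Injective f ∧
    f 0 = x ∧ f 1 = y ∧ ∀ t, f t ∈ S

/-- A set is arcwise connected if any two of its points are joined by an arc in it. -/
def IsArcwiseConnected {X : Type*} [MetricSpace X] (S : Set X) : Prop :=
  ∀ x ∈ S, ∀ y ∈ S, ArcIn S x y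

/-- The arc component of `x` in `S`. -/
def arcComponent {X : Type*} [MetricSpace X] (S : Set X) (x : X) : Set X :=
  {y | y ∈ S ∧ ArcIn S x y}

/-- A continuum `K` is unicoherent if the intersection of any two subcontinua
whose union is `K` is connected. -/
def IsUnicoherent {X : Type*} [MetricSpace X] (K : Set X) : Prop :=
  ∀ A B : Set X, IsCompact A → IsConnected A → IsCompact B → IsConnected B →
    A ∪ B = K → IsConnected (A ∩ B)

/-- A dendroid: an arcwise connected, hereditarily unicoherent continuum. -/
def IsDendroid (X : Type*) [MetricSpace X] [CompactSpace X] [ConnectedSpace X]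
    [Nonempty X] : Prop :=
  IsArcwiseConnected (univ : Set X) ∧
    ∀ K : Set X, IsCompact K → IsConnected K → IsUnicoherent K

/-- A strong center: a point `p` for which there are nonempty open sets `U`, `V`
such that every arc from `U` to `V` passes through `p`. -/
def IsStrongCenter {X : Type*} [MetricSpace X] (p : X) : Prop :=
  ∃ U V : Set X, IsOpen U ∧ IsOpen V ∧ U.Nonempty ∧ V.Nonempty ∧
    ∀ f : unitInterval → X, Continuous f → Function.Injective f →
      f 0 ∈ U → f 1 ∈ V → ∃ t, f t = p

/-- A homogeneous space: any point can be mapped to any other by a self-homeomorphism. -/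
def IsHomogeneous (X : Type*) [MetricSpace X] : Prop :=
  ∀ p q : X, ∃ h : X ≃ₜ X, h p = q

open Topology

theorem NonemptyCompacts.exists_lt_one_hausdorffDist_lt {Y : Type*} [MetricSpace Y]
    {γ : unitInterval → NonemptyCompacts Y} (hγ : ContinuousAt γ 1) {ε : ℝ} (hε : 0 < ε) :
    ∃ t < 1, hausdorffDist (γ t : Set Y) (γ 1) < ε := by
  have : (𝓝[<] (1 : unitInterval)).NeBot := nhdsLT_neBot_of_exists_lt ⟨0, zero_lt_one⟩
  have hclose : ∀ᶠ t in 𝓝[<] (1 : unitInterval), dist (γ t) (γ 1) < ε :=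
    hγ.tendsto.mono_left nhdsWithin_le_nhds (ball_mem_nhds _ hε)
  obtain ⟨t, hdist, hlt⟩ := (hclose.and self_mem_nhdsWithin).exists
  exact ⟨t, hlt, NonemptyCompacts.dist_eq.symm.trans_lt hdist⟩

theorem nonblocker_is_shore (A : Set X) (hA : IsNonBlocker A) :
    IsShoreSet A := by
  obtain ⟨hclosed, hnonempty, hproper, hnonblock⟩ := hA
  refine ⟨hclosed, hnonempty, hproper, fun ε hε => ?_⟩
  obtain ⟨x, hx⟩ := (ne_univ_iff_exists_notMem A).mp hproper
  obtain ⟨α, ⟨hcont, hconn, -⟩, -, hα1, havoid⟩ := hnonblock x hx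
  obtain ⟨t, ht, hdist⟩ :=
    NonemptyCompacts.exists_lt_one_hausdorffDist_lt hcont.continuousAt hε
  exact ⟨α t, (α t).isCompact, hconn t, hα1 ▸ hdist, havoid t ht⟩
end

section
/- Let X be a continuum, and let A, B ∈ C(X) be subcontinua. Then B does not block A (in the path sense) if and only if there exists an order arc α: [0,1] → C(X) with α(0) = A, α(1) = X and α(t) ∩ B = ∅ for all t < 1. -/
open Set Metric TopologicalSpace unitInterval

variable {X : Type*} [MetricSpace X] [CompactSpace X] [ConnectedSpace X] [Nonempty X]

/-!
Given a path `γ` in `2^X` from `A` to `X` that misses `B` before time `1`, the running unions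
`C t = ⋃ s ≤ t, γ s` form a path of compacta that is monotone for inclusion, still misses `B`
before time `1`, and consists of continua: in the Vietoris topology `s ↦ γ s` is a connected
family of sets one of which, `γ 0 = A`, is connected. A continuous gauge on `C(X)` that is strictly
monotone for inclusion detects the intervals on which `C` is constant; collapsing them turns `C`
into an order arc with the same endpoints. The converse is immediate.
-/

lemma isClosed_setOf_Iic_subset {α : Type*} [LinearOrder α] [TopologicalSpace α]
    [ClosedIicTopology α] {F : Set α} (hF : IsClosed F) : IsClosed {t | Iic t ⊆ F} := by
  have : {t | Iic t ⊆ F} = F ∩ ⋂ s ∈ Fᶜ, Iic s := by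
    ext t
    simp only [mem_ofPred_eq, mem_inter_iff, mem_iInter, mem_Iic, mem_compl_iff]
    refine ⟨fun h => ⟨h le_rfl, fun s hs => le_of_not_ge fun hst => hs (h hst)⟩,
      fun ⟨ht, h⟩ s hst => ?_⟩
    by_contra hs
    exact hs (le_antisymm hst (h s hs) ▸ ht)
  rw [this]
  exact hF.inter (isClosed_biInter fun s _ => isClosed_Iic)

lemma isOpen_setOf_Iic_subset {α : Type*} [CompleteLinearOrder α] [TopologicalSpace α]
    [OrderTopology α] {U : Set α} (hU : IsOpen U) : IsOpen {t | Iic t ⊆ U} := by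
  rcases Uᶜ.eq_empty_or_nonempty with hUc | hUc
  · simp [compl_empty_iff.1 hUc]
  have hmem : sInf Uᶜ ∉ U := hU.isClosed_compl.sInf_mem hUc
  have : {t | Iic t ⊆ U} = Iio (sInf Uᶜ) := by
    ext t
    refine ⟨fun ht => lt_of_not_ge fun hle => hmem (ht hle), fun ht s hs => ?_⟩
    by_contra hsU
    exact (sInf_le hsU).trans hs |>.not_gt ht
  rw [this]
  exact isOpen_Iio

namespace TopologicalSpace.NonemptyCompacts

section

variable {α : Type*} [TopologicalSpace α]

attribute [local instance] TopologicalSpace.vietoris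

lemma isCompact_accumulate {γ : I → NonemptyCompacts α} (hγ : Continuous γ) (t : I) :
    IsCompact (accumulate (fun s => (γ s : Set α)) t) := by
  have := Compacts.isCompact_biUnion_coe_of_isCompact
    (isClosed_Iic.isCompact.image (continuous_toCompacts.comp hγ) (s := Iic t))
  rw [biUnion_image] at this
  rwa [accumulate_def]

def accumulate (γ : C(I, NonemptyCompacts α)) (t : I) : NonemptyCompacts α :=
  ⟨⟨Set.accumulate (fun s => (γ s : Set α)) t, isCompact_accumulate γ.continuous t⟩,
    (γ t).nonempty.mono subset_accumulate⟩

variable (γ : C(I, NonemptyCompacts α))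

lemma coe_accumulate (t : I) : (accumulate γ t : Set α) = ⋃ s ≤ t, (γ s : Set α) :=
  accumulate_def

lemma le_accumulate (t : I) : γ t ≤ accumulate γ t :=
  subset_accumulate (s := fun s => (γ s : Set α))

lemma accumulate_zero : accumulate γ 0 = γ 0 := by
  refine le_antisymm (fun x hx => ?_) (le_accumulate γ 0)
  obtain ⟨s, hs, hxs⟩ := mem_accumulate.1 hx
  rwa [le_antisymm hs nonneg'] at hxs

lemma monotone_accumulate : Monotone (accumulate γ) := fun _ _ h =>
  Set.monotone_accumulate h

lemma continuous_accumulate : Continuous (accumulate γ) := by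
  have hsub : ∀ (U : Set α) (t : I),
      (accumulate γ t : Set α) ⊆ U ↔ Iic t ⊆ {s | (γ s : Set α) ⊆ U} := by
    intro U t
    rw [coe_accumulate, iUnion₂_subset_iff]
    rfl
  rw [isEmbedding_coe.continuous_iff, vietoris.continuous_iff]
  refine ⟨fun U hU => ?_, fun F hF => ?_⟩
  · simp only [preimage, Function.comp_apply, mem_powerset_iff, hsub]
    exact isOpen_setOf_Iic_subset ((isOpen_subsets_of_isOpen hU).preimage γ.continuous)
  · simp only [preimage, Function.comp_apply, mem_powerset_iff, hsub]
    exact isClosed_setOf_Iic_subset ((isClosed_subsets_of_isClosed hF).preimage γ.continuous)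

lemma isPreconnected_accumulate (h0 : IsPreconnected (γ 0 : Set α)) (t : I) :
    IsPreconnected (accumulate γ t : Set α) :=
  vietoris.isPreconnected_biUnion (s := Iic t) _root_.isPreconnected_Iic
    (continuous_coe.comp γ.continuous).continuousOn ⟨0, nonneg', h0⟩

end

section

variable {α : Type*} [MetricSpace α] [SeparableSpace α] [BoundedSpace α] [Nonempty α]

/-- The witness is `K ↦ -∑ 2⁻ⁿ infDist xₙ K` for a dense sequence `xₙ`. -/
lemma exists_continuous_strictMono :
    ∃ f : NonemptyCompacts α → ℝ, Continuous f ∧ StrictMono f := by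
  set x := denseSeq α
  set term : ℕ → NonemptyCompacts α → ℝ := fun n K => (1 / 2) ^ n * infDist (x n) K
  have term_le : ∀ n K, ‖term n K‖ ≤ (1 / 2) ^ n * diam (univ : Set α) := by
    intro n K
    obtain ⟨k, hk⟩ := K.nonempty
    dsimp only [term]
    rw [Real.norm_of_nonneg (mul_nonneg (by positivity) infDist_nonneg)]
    gcongr
    exact (infDist_le_dist_of_mem hk).trans
      (dist_le_diam_of_mem (Bornology.isBounded_univ.2 inferInstance) (mem_univ _) (mem_univ _))
  have summable : ∀ K, Summable (term · K) := fun K =>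
    (summable_geometric_two.mul_right _).of_norm_bounded (term_le · K)
  have term_anti : ∀ n, Antitone (term n) := fun n K L hKL => by
    dsimp only [term]
    gcongr
    exact infDist_le_infDist_of_subset hKL K.nonempty
  refine ⟨fun K => -∑' n, term n K, (continuous_tsum (fun n => continuous_const.mul
    (lipschitz_infDist_set (x n)).continuous) (summable_geometric_two.mul_right _) term_le).neg,
    fun K L hKL => neg_lt_neg ?_⟩
  obtain ⟨y, hyL, hyK⟩ := exists_of_ssubset hKL
  have hr : 0 < infDist y K := (K.isCompact.isClosed.notMem_iff_infDist_pos K.nonempty).1 hyK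
  obtain ⟨n, hn⟩ :=
    denseRange_iff.1 (denseRange_denseSeq α) y (infDist y K / 2) (by positivity)
  refine (summable L).tsum_lt_tsum (i := n) (fun m => term_anti m hKL.le) ?_ (summable K)
  have hfar : infDist y K ≤ infDist (x n) K + dist y (x n) := infDist_le_infDist_add_dist
  have hnear : infDist (x n) L ≤ dist (x n) y := infDist_le_dist_of_mem hyL
  dsimp only [term]
  gcongr
  rw [dist_comm] at hn hfar
  linarith

end

end TopologicalSpace.NonemptyCompacts

lemma Monotone.exists_normalization_unitInterval {ψ : I → ℝ} (hmono : Monotone ψ)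
    (hψ : Continuous ψ) (h01 : ψ 0 < ψ 1) :
    ∃ q : I → I, Continuous q ∧ Function.Surjective q ∧ q 0 = 0 ∧ q 1 = 1 ∧
      ∀ s t, q s ≤ q t ↔ ψ s ≤ ψ t := by
  have hd : 0 < ψ 1 - ψ 0 := sub_pos.2 h01
  let q : I → I := fun t => ⟨(ψ t - ψ 0) / (ψ 1 - ψ 0),
    div_nonneg (sub_nonneg.2 (hmono nonneg')) hd.le,
    (div_le_one hd).2 (sub_le_sub_right (hmono le_one') _)⟩
  refine ⟨q, by fun_prop, fun u => ?_, ?_, ?_, fun s t => ?_⟩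
  · have hu : ψ 0 + u * (ψ 1 - ψ 0) ∈ Icc (ψ 0) (ψ 1) :=
      ⟨by nlinarith [u.2.1], by nlinarith [u.2.2]⟩
    obtain ⟨t, ht⟩ := intermediate_value_univ 0 1 hψ hu
    exact ⟨t, Subtype.ext (by simp [q, ht, hd.ne'])⟩
  · exact Subtype.ext (by simp [q])
  · exact Subtype.ext (by simp [q, hd.ne'])
  · rw [← Subtype.coe_le_coe]
    simp only [q]
    rw [div_le_div_iff_of_pos_right hd, sub_le_sub_iff_right]

/-- The reparametrization collapses the intervals on which `C` is constant: it is the quotient of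
`I` by the fibres of `f ∘ C`, rescaled to `I`. -/
lemma Monotone.exists_strictMono_reparam {Y : Type*} [TopologicalSpace Y] [PartialOrder Y]
    {f : Y → ℝ} (hf : Continuous f) (hf_mono : StrictMono f) {C : I → Y} (hC : Continuous C)
    (hC_mono : Monotone C) (h01 : C 0 ≠ C 1) :
    ∃ g : I → I, StrictMono g ∧ Continuous (C ∘ g) ∧ StrictMono (C ∘ g) ∧
      C (g 0) = C 0 ∧ C (g 1) = C 1 := by
  obtain ⟨q, hq, hq_surj, hq0, hq1, hq_le⟩ :=
    (hf_mono.monotone.comp hC_mono).exists_normalization_unitInterval (hf.comp hC)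
      (hf_mono (lt_of_le_of_ne (hC_mono le_one') h01))
  have hq_lt : ∀ s t, q s < q t ↔ f (C s) < f (C t) := fun s t => by
    simp only [lt_iff_le_not_ge, hq_le, Function.comp_apply]
  have hq_fiber : ∀ s t, q s = q t → C s = C t := fun s t hst => by
    wlog h : s ≤ t generalizing s t
    · exact (this t s hst.symm (le_of_not_ge h)).symm
    refine eq_of_le_of_not_lt (hC_mono h) fun hlt => (hf_mono hlt).ne ?_
    exact le_antisymm ((hq_le s t).1 hst.le) ((hq_le t s).1 hst.ge)
  set g := Function.surjInv hq_surj
  have hqg : ∀ u, q (g u) = u := Function.surjInv_eq hq_surj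
  have hCgq : (C ∘ g) ∘ q = C := funext fun t => hq_fiber _ _ (hqg (q t))
  have hfCg_lt : ∀ {u v}, u < v → f (C (g u)) < f (C (g v)) := fun {u v} huv => by
    rwa [← hqg u, ← hqg v, hq_lt] at huv
  have hg : StrictMono g := fun u v huv =>
    lt_of_not_ge fun h => (hfCg_lt huv).not_ge (hf_mono.monotone (hC_mono h))
  refine ⟨g, hg, ?_, fun u v huv => lt_of_le_of_ne (hC_mono (hg huv).le)
      fun h => (hfCg_lt huv).ne (congrArg f h),
    hq_fiber _ _ ((hqg 0).trans hq0.symm), hq_fiber _ _ ((hqg 1).trans hq1.symm)⟩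
  rw [(Topology.IsQuotientMap.of_surjective_continuous hq_surj hq).continuous_iff, hCgq]
  exact hC

theorem not_blocks_iff_order_arc_general (A B : Set X) (hAconn : IsConnected A) (hBne : B.Nonempty) :
    (∃ γ : unitInterval → NonemptyCompacts X, Continuous γ ∧
        (γ 0 : Set X) = A ∧ (γ 1 : Set X) = univ ∧
        ∀ t : unitInterval, t < 1 → (γ t : Set X) ∩ B = ∅) ↔
      (∃ α : unitInterval → NonemptyCompacts X, IsOrderArc α ∧
        (α 0 : Set X) = A ∧ (α 1 : Set X) = univ ∧
        ∀ t : unitInterval, t < 1 → (α t : Set X) ∩ B = ∅) := by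
  refine ⟨fun ⟨γ, hγ, hγ0, hγ1, hγB⟩ => ?_,
    fun ⟨α, hα, hα0, hα1, hαB⟩ => ⟨α, hα.1, hα0, hα1, hαB⟩⟩
  set C := NonemptyCompacts.accumulate ⟨γ, hγ⟩ with hC
  have hC0 : (C 0 : Set X) = A := by rw [hC, NonemptyCompacts.accumulate_zero]; exact hγ0
  have hC1 : (C 1 : Set X) = univ :=
    eq_univ_of_univ_subset (hγ1 ▸ NonemptyCompacts.le_accumulate ⟨γ, hγ⟩ 1)
  have hCB : ∀ t < 1, (C t : Set X) ∩ B = ∅ := fun t ht => by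
    simp only [hC, NonemptyCompacts.coe_accumulate, iUnion₂_inter, iUnion_eq_empty]
    exact fun s hs => hγB s (hs.trans_lt ht)
  have hC01 : C 0 ≠ C 1 := fun h => by
    obtain ⟨b, hb⟩ := hBne
    have hb0 : b ∈ (C 0 : Set X) ∩ B := ⟨h ▸ hC1 ▸ mem_univ b, hb⟩
    rwa [hCB 0 zero_lt_one] at hb0
  obtain ⟨f, hf, hf_mono⟩ := NonemptyCompacts.exists_continuous_strictMono (α := X)
  obtain ⟨g, hg, hCg, hCg_mono, hg0, hg1⟩ :=
    (NonemptyCompacts.monotone_accumulate _).exists_strictMono_reparam hf hf_mono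
      (NonemptyCompacts.continuous_accumulate _) hC01
  refine ⟨C ∘ g, ⟨hCg, fun u => ⟨(C (g u)).nonempty,
    NonemptyCompacts.isPreconnected_accumulate _ (hγ0 ▸ hAconn.isPreconnected) _⟩,
    fun s t hst => hCg_mono hst⟩, ?_, ?_, fun u hu => hCB _ ((hg hu).trans_le le_one')⟩
  · exact (congrArg _ hg0).trans hC0
  · exact (congrArg _ hg1).trans hC1

theorem not_blocks_iff_order_arc (A B : Set X)
    (hAc : IsCompact A) (hAne : A.Nonempty) (hAconn : IsConnected A)
    (hBc : IsCompact B) (hBne : B.Nonempty) (hBconn : IsConnected B) :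
    (∃ γ : unitInterval → NonemptyCompacts X, Continuous γ ∧
        (γ 0 : Set X) = A ∧ (γ 1 : Set X) = univ ∧
        ∀ t : unitInterval, t < 1 → (γ t : Set X) ∩ B = ∅) ↔
      (∃ α : unitInterval → NonemptyCompacts X, IsOrderArc α ∧
        (α 0 : Set X) = A ∧ (α 1 : Set X) = univ ∧
        ∀ t : unitInterval, t < 1 → (α t : Set X) ∩ B = ∅) :=
  not_blocks_iff_order_arc_general A B hAconn hBne
end

section
/- Let X be a continuum and let x, y ∈ X with y ∉ B(x). Then for every subcontinuum C of X with y ∈ C and x ∉ C, we have C ∩ B(x) = ∅. -/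
open Set Metric TopologicalSpace unitInterval

variable {X : Type*} [MetricSpace X] [CompactSpace X] [ConnectedSpace X] [Nonempty X]

namespace BlockProof

variable {X : Type*} [MetricSpace X]

/-- Clopen separation: if the connected component of `a` in a compact set `F` misses a
compact set `S`, there is a relatively clopen subset of `F` containing `a`, missing `S`,
and absorbing every preconnected subset of `F` that meets it. -/
lemma clopen_separation {F S : Set X} (hF : IsCompact F) (hS : IsCompact S)
    {a : X} (ha : a ∈ F) (hdis : connectedComponentIn F a ∩ S = ∅) :
    ∃ W V : Set X, IsOpen V ∧ W = F ∩ V ∧ a ∈ W ∧ W ∩ S = ∅ ∧ IsClosed W ∧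
      ∀ T, T ⊆ F → IsPreconnected T → (T ∩ W).Nonempty → T ⊆ W := by
  haveI : CompactSpace F := isCompact_iff_compactSpace.mp hF
  set a' : F := ⟨a, ha⟩
  have hS'cl : IsClosed ((↑) ⁻¹' S : Set F) := hS.isClosed.preimage continuous_subtype_val
  have hS'cpt : IsCompact ((↑) ⁻¹' S : Set F) := hS'cl.isCompact
  have hdis' : ((↑) ⁻¹' S : Set F) ∩ ⋂ Z : {Z : Set F // IsClopen Z ∧ a' ∈ Z}, (Z : Set F) = ∅ := by
    rw [← connectedComponent_eq_iInter_isClopen a']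
    ext p
    simp only [mem_inter_iff, mem_empty_iff_false, iff_false, not_and, mem_preimage]
    intro hpS hpc
    have hp : (p : X) ∈ connectedComponentIn F a ∩ S := by
      refine ⟨?_, hpS⟩
      rw [connectedComponentIn_eq_image ha]
      exact ⟨p, hpc, rfl⟩
    rw [hdis] at hp
    exact hp
  obtain ⟨t, ht⟩ := hS'cpt.elim_finite_subfamily_closed _ (fun Z => Z.2.1.1) hdis'
  set W' : Set F := ⋂ Z ∈ t, (Z : Set F) with hW'def
  have hW'clopen : IsClopen W' := isClopen_biInter_finset fun Z _ => Z.2.1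
  have haW' : a' ∈ W' := mem_iInter₂.mpr fun Z _ => Z.2.2
  have hW'S' : W' ∩ ((↑) ⁻¹' S : Set F) = ∅ := by
    rw [inter_comm]; exact ht
  obtain ⟨V, hVopen, hVW'⟩ := isOpen_induced_iff.mp hW'clopen.2
  refine ⟨(↑) '' W', V, hVopen, ?_, ⟨a', haW', rfl⟩, ?_, ?_, ?_⟩
  · rw [← hVW', Subtype.image_preimage_coe, inter_comm]
  · ext p
    simp only [mem_inter_iff, mem_empty_iff_false, iff_false, not_and]
    rintro ⟨p', hp', rfl⟩ hpS
    have : p' ∈ W' ∩ ((↑) ⁻¹' S : Set F) := ⟨hp', hpS⟩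
    rw [hW'S'] at this
    exact this
  · have : IsCompact W' := hW'clopen.1.isCompact
    exact (this.image continuous_subtype_val).isClosed
  · intro T hTF hTpre hTW
    have hT' : IsPreconnected ((↑) ⁻¹' T : Set F) := by
      refine Topology.IsInducing.subtypeVal.isPreconnected_image.mp ?_
      rwa [Subtype.image_preimage_coe, inter_eq_right.mpr hTF]
    obtain ⟨p, hpT, p', hp'W', hp'⟩ := hTW
    have hsub : ((↑) ⁻¹' T : Set F) ⊆ W' := by
      refine hT'.subset_isClopen hW'clopen ⟨p', ?_, hp'W'⟩
      rw [mem_preimage, hp']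
      exact hpT
    intro q hq
    exact ⟨⟨q, hTF hq⟩, hsub hq, rfl⟩

/-- Boundary bumping: in a compact connected `K`, the component of a point of a proper
closed subset `F` meets the closure of `K \ F`. -/
lemma bump {K F : Set X} (hK : IsCompact K) (hKc : IsPreconnected K) (hKF : F ⊆ K)
    (hFcl : IsClosed F) {a : X} (ha : a ∈ F) (hne : F ≠ K) :
    ∃ q ∈ connectedComponentIn F a, q ∈ closure (K \ F) := by
  by_contra hcon
  push_neg at hcon
  have hF : IsCompact F := hK.of_isClosed_subset hFcl hKF
  have hScpt : IsCompact (closure (K \ F) ∩ K) :=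
    hK.of_isClosed_subset (isClosed_closure.inter hK.isClosed) inter_subset_right
  have hdis : connectedComponentIn F a ∩ (closure (K \ F) ∩ K) = ∅ := by
    rw [eq_empty_iff_forall_notMem]
    rintro q ⟨h1, h2, -⟩
    exact hcon q h1 h2
  obtain ⟨W, V, hVopen, hWeq, haW, hWS, hWcl, habs⟩ := clopen_separation hF hScpt ha hdis
  set V' := V ∩ (closure (K \ F))ᶜ with hV'def
  have hV'open : IsOpen V' := hVopen.inter isClosed_closure.isOpen_compl
  have hWV' : W ⊆ V' := by
    intro p hp
    refine ⟨(hWeq ▸ hp).2, fun hcl => ?_⟩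
    have hpK : p ∈ K := hKF (hWeq ▸ hp).1
    have : p ∈ W ∩ (closure (K \ F) ∩ K) := ⟨hp, hcl, hpK⟩
    rw [hWS] at this
    exact this
  have hKV' : K ∩ V' ⊆ W := by
    rintro p ⟨hpK, hpV, hpcl⟩
    have hpF : p ∈ F := by
      by_contra hpF
      exact hpcl (subset_closure ⟨hpK, hpF⟩)
    rw [hWeq]
    exact ⟨hpF, hpV⟩
  by_cases hKW : (K ∩ Wᶜ).Nonempty
  · have hcover : K ⊆ V' ∪ Wᶜ := by
      intro p hp
      by_cases hpW : p ∈ W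
      · exact Or.inl (hWV' hpW)
      · exact Or.inr hpW
    have := hKc V' Wᶜ hV'open hWcl.isOpen_compl hcover
      ⟨a, hKF ha, hWV' haW⟩ hKW
    obtain ⟨p, hpK, hpV', hpW⟩ := this
    exact hpW (hKV' ⟨hpK, hpV'⟩)
  · rw [not_nonempty_iff_eq_empty] at hKW
    have hKsubW : K ⊆ W := by
      intro p hp
      by_contra hpW
      have : p ∈ K ∩ Wᶜ := ⟨hp, hpW⟩
      rw [hKW] at this
      exact this
    have : F = K := le_antisymm hKF (hKsubW.trans (hWeq ▸ inter_subset_left))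
    exact hne this

/-- Bumping for `ε`-neighborhoods: the component of `a` in `B ∩ {infDist · A ≤ ε}` contains
a point at `infDist` exactly `ε` from `A`, provided this set is not all of `B`. -/
lemma bump_infDist {B A : Set X} (hB : IsCompact B) (hBc : IsPreconnected B)
    {ε : ℝ} (hε : 0 < ε) {a : X} (ha : a ∈ B) (haA : infDist a A ≤ ε)
    (hne : B ∩ {p | infDist p A ≤ ε} ≠ B) :
    ∃ q ∈ connectedComponentIn (B ∩ {p | infDist p A ≤ ε}) a, infDist q A = ε := by
  set E := B ∩ {p | infDist p A ≤ ε} with hEdef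
  have hEcl : IsClosed E := hB.isClosed.inter (isClosed_le (continuous_infDist_pt A) continuous_const)
  obtain ⟨q, hq1, hq2⟩ := bump hB hBc inter_subset_left hEcl (⟨ha, haA⟩ : a ∈ E) hne
  refine ⟨q, hq1, le_antisymm ((connectedComponentIn_subset E a hq1).2) ?_⟩
  have hsub : B \ E ⊆ {p | ε ≤ infDist p A} := by
    rintro p ⟨hpB, hpE⟩
    by_contra hlt
    simp only [mem_setOf_eq, not_le] at hlt
    exact hpE ⟨hpB, show infDist p A ≤ ε from le_of_lt hlt⟩
  have := closure_minimal hsub (isClosed_le continuous_const (continuous_infDist_pt A))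
  exact this hq2

/-- One growth step: add to `G` all connected components of the `ε`-neighborhood of `G`
inside `B` which meet `G`. -/
def grow (B G : Set X) (ε : ℝ) : Set X :=
  G ∪ {p ∈ B ∩ {q | infDist q G ≤ ε} |
        (connectedComponentIn (B ∩ {q | infDist q G ≤ ε}) p ∩ G).Nonempty}

section Grow

variable {B G : Set X} {ε : ℝ}

lemma mem_grow_iff {p : X} :
    p ∈ grow B G ε ↔ p ∈ G ∨ (p ∈ B ∩ {q | infDist q G ≤ ε} ∧
      (connectedComponentIn (B ∩ {q | infDist q G ≤ ε}) p ∩ G).Nonempty) :=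
  Iff.rfl

lemma E_isClosed (hB : IsCompact B) : IsClosed (B ∩ {q | infDist q G ≤ ε}) :=
  hB.isClosed.inter (isClosed_le (continuous_infDist_pt G) continuous_const)

lemma subset_E (hGB : G ⊆ B) (hε : 0 ≤ ε) : G ⊆ B ∩ {q | infDist q G ≤ ε} :=
  fun p hp => ⟨hGB hp, by simpa [infDist_zero_of_mem hp] using hε⟩

lemma subset_grow : G ⊆ grow B G ε := subset_union_left

lemma grow_subset_E (hGB : G ⊆ B) (hε : 0 ≤ ε) :
    grow B G ε ⊆ B ∩ {q | infDist q G ≤ ε} := by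
  rintro p (hp | hp)
  · exact subset_E hGB hε hp
  · exact hp.1

lemma grow_subset (hGB : G ⊆ B) (hε : 0 ≤ ε) : grow B G ε ⊆ B :=
  (grow_subset_E hGB hε).trans inter_subset_left

lemma grow_hd (hGB : G ⊆ B) (hε : 0 ≤ ε) :
    hausdorffDist G (grow B G ε) ≤ ε := by
  apply hausdorffDist_le_of_infDist hε
  · exact fun p hp => by
      simpa [infDist_zero_of_mem (subset_grow hp : p ∈ grow B G ε)] using hε
  · exact fun p hp => (grow_subset_E hGB hε hp).2

lemma grow_isCompact (hB : IsCompact B) (hG : IsCompact G) (hGB : G ⊆ B) (hε : 0 ≤ ε) :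
    IsCompact (grow B G ε) := by
  set E := B ∩ {q | infDist q G ≤ ε} with hEdef
  have hEcl : IsClosed E := E_isClosed hB
  have hEcpt : IsCompact E := hB.of_isClosed_subset hEcl inter_subset_left
  have hclosed : IsClosed (grow B G ε) := by
    apply isClosed_of_closure_subset
    intro p hp
    have hpE : p ∈ E := closure_minimal (grow_subset_E hGB hε) hEcl hp
    by_cases hpG : p ∈ G
    · exact Or.inl hpG
    · refine Or.inr ⟨hpE, ?_⟩
      by_contra hcomp
      rw [not_nonempty_iff_eq_empty] at hcomp
      obtain ⟨W, V, hVopen, hWeq, hpW, hWG, hWcl, habs⟩ :=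
        clopen_separation hEcpt hG hpE hcomp
      have hpV : p ∈ V := (hWeq ▸ hpW).2
      obtain ⟨q, hqV, hqgrow⟩ := mem_closure_iff.mp hp V hVopen hpV
      have hqE : q ∈ E := grow_subset_E hGB hε hqgrow
      have hqW : q ∈ W := hWeq ▸ ⟨hqE, hqV⟩
      rw [eq_empty_iff_forall_notMem] at hWG
      rcases (mem_grow_iff.mp hqgrow) with hqG | ⟨-, hqc⟩
      · exact hWG q ⟨hqW, hqG⟩
      · have hT : connectedComponentIn E q ⊆ W :=
          habs _ (connectedComponentIn_subset E q) isPreconnected_connectedComponentIn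
            ⟨q, mem_connectedComponentIn hqE, hqW⟩
        obtain ⟨r, hrT, hrG⟩ := hqc
        exact hWG r ⟨hT hrT, hrG⟩
  exact hB.of_isClosed_subset hclosed (grow_subset hGB hε)

lemma grow_isPreconnected (hGc : IsPreconnected G) (hGne : G.Nonempty) :
    IsPreconnected (grow B G ε) := by
  obtain ⟨g₀, hg₀⟩ := hGne
  set E := B ∩ {q | infDist q G ≤ ε} with hEdef
  apply isPreconnected_of_forall g₀
  intro y hy
  rcases mem_grow_iff.mp hy with hyG | ⟨hyE, hyc⟩
  · exact ⟨G, subset_grow, hg₀, hyG, hGc⟩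
  · refine ⟨G ∪ connectedComponentIn E y, ?_, Or.inl hg₀,
      Or.inr (mem_connectedComponentIn hyE), ?_⟩
    · rintro r (hrG | hrT)
      · exact subset_grow hrG
      · refine Or.inr ⟨connectedComponentIn_subset E y hrT, ?_⟩
        rw [← connectedComponentIn_eq hrT]
        exact hyc
    · obtain ⟨w, hwT, hwG⟩ := hyc
      exact IsPreconnected.union w hwG hwT hGc isPreconnected_connectedComponentIn

lemma grow_absorb (hBc : IsPreconnected B) (hGne : G.Nonempty) (hGB : G ⊆ B)
    (h : ∀ p ∈ B, infDist p G ≤ ε) : grow B G ε = B := by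
  have hε : 0 ≤ ε := by
    obtain ⟨g, hg⟩ := hGne
    have := h g (hGB hg)
    rwa [infDist_zero_of_mem hg] at this
  have hEB : B ∩ {q | infDist q G ≤ ε} = B := by
    apply inter_eq_left.mpr
    exact fun p hp => h p hp
  apply le_antisymm (grow_subset hGB hε)
  intro p hp
  refine Or.inr ⟨by rw [hEB]; exact hp, ?_⟩
  rw [hEB, hBc.connectedComponentIn hp]
  obtain ⟨g, hg⟩ := hGne
  exact ⟨g, hGB hg, hg⟩

lemma grow_reaches (hB : IsCompact B) (hBc : IsPreconnected B) {A : Set X}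
    (hA : IsCompact A) (hAc : IsPreconnected A) (hAne : A.Nonempty) (hAB : A ⊆ B)
    {ε : ℝ} (hε : 0 < ε) : ∃ n, (fun G => grow B G ε)^[n] A = B := by
  set g : Set X → Set X := fun G => grow B G ε with hgdef
  set Gs : ℕ → Set X := fun n => g^[n] A with hGsdef
  have hGsS : ∀ n, Gs (n + 1) = grow B (Gs n) ε := fun n => Function.iterate_succ_apply' g n A
  have hinv : ∀ n, IsCompact (Gs n) ∧ IsPreconnected (Gs n) ∧ (Gs n).Nonempty ∧ Gs n ⊆ B := by
    intro n
    induction n with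
    | zero => exact ⟨hA, hAc, hAne, hAB⟩
    | succ n ih =>
      rw [hGsS n]
      exact ⟨grow_isCompact hB ih.1 ih.2.2.2 hε.le,
        grow_isPreconnected ih.2.1 ih.2.2.1,
        ih.2.2.1.mono subset_grow,
        grow_subset ih.2.2.2 hε.le⟩
  have hmono : Monotone Gs := by
    apply monotone_nat_of_le_succ
    intro n
    rw [hGsS n]
    exact subset_grow
  by_contra hnot
  push_neg at hnot
  set L := closure (⋃ n, Gs n) with hLdef
  have hLB : L ⊆ B := closure_minimal (iUnion_subset fun n => (hinv n).2.2.2) hB.isClosed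
  have hLcpt : IsCompact L := hB.of_isClosed_subset isClosed_closure hLB
  have hGsL : ∀ n, Gs n ⊆ L := fun n => (subset_iUnion Gs n).trans subset_closure
  have hLne : L.Nonempty := hAne.mono (hGsL 0)
  have happrox : ∀ δ : ℝ, 0 < δ → ∃ i, ∀ p ∈ L, infDist p (Gs i) ≤ δ := by
    intro δ hδ
    have hcover : L ⊆ ⋃ i, {p | infDist p (Gs i) < δ} := by
      intro p hp
      have h0 : infDist p (⋃ n, Gs n) = 0 := infDist_zero_of_mem_closure hp
      have hne : (⋃ n, Gs n).Nonempty := hAne.mono (subset_iUnion Gs 0)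
      have : infDist p (⋃ n, Gs n) < δ := by rw [h0]; exact hδ
      obtain ⟨q, hq, hqd⟩ := (infDist_lt_iff hne).mp this
      obtain ⟨i, hqi⟩ := mem_iUnion.mp hq
      exact mem_iUnion.mpr ⟨i, lt_of_le_of_lt (infDist_le_dist_of_mem hqi) hqd⟩
    obtain ⟨t, ht⟩ := hLcpt.elim_finite_subcover _
      (fun i => isOpen_lt (continuous_infDist_pt _) continuous_const) hcover
    have htne : t.Nonempty := by
      rcases Finset.eq_empty_or_nonempty t with rfl | h
      · simp only [Finset.notMem_empty, iUnion_of_empty, iUnion_empty] at ht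
        exact absurd (ht hLne.choose_spec) (notMem_empty _)
      · exact h
    refine ⟨t.max' htne, fun p hp => ?_⟩
    obtain ⟨i, hit, hpi⟩ := mem_iUnion₂.mp (ht hp)
    have hsub : Gs i ⊆ Gs (t.max' htne) := hmono (Finset.le_max' t i hit)
    exact le_of_lt (lt_of_le_of_lt (infDist_le_infDist_of_subset hsub (hinv i).2.2.1) hpi)
  by_cases hcase : ∀ p ∈ B, infDist p L ≤ ε / 2
  · obtain ⟨i, hi⟩ := happrox (ε / 2) (half_pos hε)
    have habs : ∀ p ∈ B, infDist p (Gs i) ≤ ε := by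
      intro p hp
      obtain ⟨q, hqL, hq⟩ := hLcpt.exists_infDist_eq_dist hLne p
      obtain ⟨r, hr, hrq⟩ := (hinv i).1.exists_infDist_eq_dist (hinv i).2.2.1 q
      calc infDist p (Gs i) ≤ dist p r := infDist_le_dist_of_mem hr
        _ ≤ dist p q + dist q r := dist_triangle p q r
        _ = infDist p L + infDist q (Gs i) := by rw [← hq, ← hrq]
        _ ≤ ε / 2 + ε / 2 := add_le_add (hcase p hp) (hi q hqL)
        _ = ε := add_halves ε
    have : Gs (i + 1) = B := by
      rw [hGsS i]
      exact grow_absorb hBc (hinv i).2.2.1 (hinv i).2.2.2 habs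
    exact hnot (i + 1) this
  · push_neg at hcase
    obtain ⟨p₀, hp₀B, hp₀⟩ := hcase
    have hne2 : B ∩ {p | infDist p L ≤ ε / 2} ≠ B := by
      intro h
      have : p₀ ∈ B ∩ {p | infDist p L ≤ ε / 2} := by rw [h]; exact hp₀B
      exact absurd this.2 (not_le.mpr hp₀)
    obtain ⟨a₀, ha₀⟩ := hAne
    have ha₀B : a₀ ∈ B := hAB ha₀
    have ha₀L : infDist a₀ L ≤ ε / 2 := by
      rw [infDist_zero_of_mem (hGsL 0 ha₀)]
      exact (half_pos hε).le
    obtain ⟨q, hqQ, hqd⟩ := bump_infDist hB hBc (half_pos hε) ha₀B ha₀L hne2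
    have hqL : q ∉ L := by
      intro h
      rw [infDist_zero_of_mem h] at hqd
      exact absurd hqd.symm (ne_of_gt (half_pos hε))
    obtain ⟨i, hi⟩ := happrox (ε / 4) (by linarith)
    set E2 := B ∩ {p | infDist p L ≤ ε / 2} with hE2def
    set Ei := B ∩ {q | infDist q (Gs i) ≤ ε} with hEidef
    set Q := connectedComponentIn E2 a₀ with hQdef
    have hQEi : Q ⊆ Ei := by
      intro p hp
      have hpE2 : p ∈ E2 := connectedComponentIn_subset E2 a₀ hp
      refine ⟨hpE2.1, ?_⟩
      obtain ⟨q', hq'L, hq'⟩ := hLcpt.exists_infDist_eq_dist hLne p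
      obtain ⟨r', hr', hr'q⟩ := (hinv i).1.exists_infDist_eq_dist (hinv i).2.2.1 q'
      have : infDist p (Gs i) ≤ dist p q' + dist q' r' :=
        le_trans (infDist_le_dist_of_mem hr') (dist_triangle p q' r')
      have h1 : dist p q' ≤ ε / 2 := hq' ▸ hpE2.2
      have h2 : dist q' r' ≤ ε / 4 := hr'q ▸ hi q' hq'L
      show infDist p (Gs i) ≤ ε
      linarith
    have ha₀E2 : a₀ ∈ E2 := ⟨ha₀B, ha₀L⟩
    have ha₀Ei : a₀ ∈ Ei := hQEi (mem_connectedComponentIn ha₀E2)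
    have ha₀Gs : a₀ ∈ Gs i := hmono (Nat.zero_le i) ha₀
    have hQsub : Q ⊆ connectedComponentIn Ei a₀ :=
      isPreconnected_connectedComponentIn.subset_connectedComponentIn
        (mem_connectedComponentIn ha₀E2) hQEi
    have hQgrow : Q ⊆ Gs (i + 1) := by
      intro p hp
      rw [hGsS i]
      refine Or.inr ⟨hQEi hp, ?_⟩
      refine ⟨a₀, ?_, ha₀Gs⟩
      rw [← connectedComponentIn_eq (hQsub hp)]
      exact mem_connectedComponentIn ha₀Ei
    exact hqL (hGsL (i + 1) (hQgrow hqQ))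

lemma ladder {B A : Set X} (hB : IsCompact B) (hBc : IsPreconnected B)
    (hA : IsCompact A) (hAc : IsPreconnected A) (hAne : A.Nonempty) (hAB : A ⊆ B)
    {ε : ℝ} (hε : 0 < ε) :
    ∃ (n : ℕ) (φ : ℕ → Set X), φ 0 = A ∧ (∀ i, n ≤ i → φ i = B) ∧ Monotone φ ∧
      (∀ i, IsCompact (φ i) ∧ IsPreconnected (φ i) ∧ (φ i).Nonempty ∧ φ i ⊆ B) ∧
      (∀ i, hausdorffDist (φ i) (φ (i + 1)) ≤ ε) := by
  obtain ⟨n, hn⟩ := grow_reaches hB hBc hA hAc hAne hAB hε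
  set g : Set X → Set X := fun G => grow B G ε with hgdef
  have hGsS : ∀ k, g^[k + 1] A = grow B (g^[k] A) ε := fun k => Function.iterate_succ_apply' g k A
  have hinv : ∀ k, IsCompact (g^[k] A) ∧ IsPreconnected (g^[k] A) ∧ (g^[k] A).Nonempty ∧
      g^[k] A ⊆ B := by
    intro k
    induction k with
    | zero => exact ⟨hA, hAc, hAne, hAB⟩
    | succ k ih =>
      rw [hGsS k]
      exact ⟨grow_isCompact hB ih.1 ih.2.2.2 hε.le, grow_isPreconnected ih.2.1 ih.2.2.1,
        ih.2.2.1.mono subset_grow, grow_subset ih.2.2.2 hε.le⟩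
  have hmono : Monotone (fun k => g^[k] A) := by
    apply monotone_nat_of_le_succ
    intro k
    rw [hGsS k]
    exact subset_grow
  refine ⟨n, fun i => g^[min i n] A, by simp, ?_, ?_, ?_, ?_⟩
  · intro i hi
    simp only [min_eq_right hi]
    exact hn
  · exact fun i j hij => hmono (min_le_min hij le_rfl)
  · exact fun i => hinv (min i n)
  · intro i
    rcases le_or_gt n i with h | h
    · simp only [min_eq_right h, min_eq_right (h.trans (Nat.le_succ i))]
      simp only [hausdorffDist_self_zero]
      exact hε.le
    · simp only [min_eq_left (le_of_lt h), min_eq_left (Nat.succ_le_of_lt h)]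
      rw [hGsS i]
      exact grow_hd (hinv i).2.2.2 hε.le

end Grow
/-- A finite ascending chain of subcontinua-like sets from `{z}` to `C`, with consecutive
Hausdorff gaps at most `e`, indexed by `ℕ` (constantly `C` from index `N` on). -/
structure Chain (z : X) (C : Set X) (e : ℝ) where
  N : ℕ
  hN : 0 < N
  φ : ℕ → Set X
  mono : Monotone φ
  zero : φ 0 = {z}
  top : ∀ i, N ≤ i → φ i = C
  cpt : ∀ i, IsCompact (φ i)
  conn : ∀ i, IsPreconnected (φ i)
  sub : ∀ i, φ i ⊆ C
  gap : ∀ i, hausdorffDist (φ i) (φ (i + 1)) ≤ e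

lemma Chain.mem_z {z : X} {C : Set X} {e : ℝ} (L : Chain z C e) (i : ℕ) : z ∈ L.φ i :=
  L.mono (Nat.zero_le i) (L.zero ▸ rfl)

lemma Chain.ne {z : X} {C : Set X} {e : ℝ} (L : Chain z C e) (i : ℕ) : (L.φ i).Nonempty :=
  ⟨z, L.mem_z i⟩

lemma Chain.refine {z : X} {C : Set X} {e : ℝ} (L : Chain z C e) {e' : ℝ} (he' : 0 < e') :
    ∃ (L' : Chain z C e') (m : ℕ), 0 < m ∧ L'.N = L.N * m ∧ ∀ i, L'.φ (i * m) = L.φ i := by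
  have hlad : ∀ i : ℕ, ∃ (n : ℕ) (ψ : ℕ → Set X), ψ 0 = L.φ i ∧
      (∀ j, n ≤ j → ψ j = L.φ (i + 1)) ∧ Monotone ψ ∧
      (∀ j, IsCompact (ψ j) ∧ IsPreconnected (ψ j) ∧ (ψ j).Nonempty ∧ ψ j ⊆ L.φ (i + 1)) ∧
      (∀ j, hausdorffDist (ψ j) (ψ (j + 1)) ≤ e') :=
    fun i => ladder (L.cpt (i + 1)) (L.conn (i + 1)) (L.cpt i) (L.conn i) (L.ne i)
      (L.mono (Nat.le_succ i)) he'
  choose n ψ h0 htop hmono hprops hgap using hlad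
  set m := (Finset.range L.N).sup n + 1 with hmdef
  have hm0 : 0 < m := Nat.succ_pos _
  have hnm : ∀ i, i < L.N → n i < m :=
    fun i hi => Nat.lt_succ_of_le (Finset.le_sup (Finset.mem_range.mpr hi))
  have hCblock : ∀ i, L.N ≤ i → ∀ k, ψ i k = C := by
    intro i hi k
    apply le_antisymm
    · have := (hprops i k).2.2.2
      rwa [L.top (i + 1) (hi.trans (Nat.le_succ i))] at this
    · have h1 : ψ i 0 ⊆ ψ i k := hmono i (Nat.zero_le k)
      rwa [h0 i, L.top i hi] at h1
  set φ' : ℕ → Set X := fun j => ψ (j / m) (min (j % m) (n (j / m))) with hφ'def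
  -- extension property
  have hext : ∀ i, φ' (i * m) = L.φ i := by
    intro i
    have hdiv : i * m / m = i := Nat.mul_div_cancel i hm0
    have hmod : i * m % m = 0 := Nat.mul_mod_left i m
    simp only [hφ'def, hdiv, hmod, Nat.min_eq_left (Nat.zero_le _), h0 i]
    -- min 0 (n i) = 0
  -- step subset and gap
  have hstep : ∀ j, φ' j ⊆ φ' (j + 1) ∧ hausdorffDist (φ' j) (φ' (j + 1)) ≤ e' := by
    intro j
    set i := j / m with hidef
    set r := j % m with hrdef
    have hrm : r < m := Nat.mod_lt j hm0
    have hj : m * i + r = j := Nat.div_add_mod j m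
    rcases Nat.lt_or_ge (r + 1) m with hcase | hcase
    · -- same block
      have hdiv : (j + 1) / m = i := by
        rw [← hj]
        rw [show m * i + r + 1 = (r + 1) + i * m by ring]
        rw [Nat.add_mul_div_right _ _ hm0, Nat.div_eq_of_lt hcase, Nat.zero_add]
      have hmod : (j + 1) % m = r + 1 := by
        rw [← hj]
        rw [show m * i + r + 1 = (r + 1) + i * m by ring]
        rw [Nat.add_mul_mod_self_right, Nat.mod_eq_of_lt hcase]
      have hval : φ' (j + 1) = ψ i (min (r + 1) (n i)) := by
        simp only [hφ'def, hdiv, hmod]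
      have hval0 : φ' j = ψ i (min r (n i)) := rfl
      rw [hval, hval0]
      constructor
      · exact hmono i (min_le_min (Nat.le_succ r) le_rfl)
      · rcases Nat.lt_or_ge r (n i) with hr | hr
        · rw [Nat.min_eq_left (Nat.succ_le_of_lt hr), Nat.min_eq_left hr.le]
          exact hgap i r
        · rw [Nat.min_eq_right hr, Nat.min_eq_right (hr.trans (Nat.le_succ r))]
          simp only [hausdorffDist_self_zero]
          exact he'.le
    · -- block boundary: r + 1 = m
      have hrm1 : r + 1 = m := le_antisymm hrm hcase
      have hj1 : j + 1 = (i + 1) * m := by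
        rw [← hj]
        calc m * i + r + 1 = m * i + (r + 1) := by ring
          _ = m * i + m := by rw [hrm1]
          _ = (i + 1) * m := by ring
      have hdiv : (j + 1) / m = i + 1 := by rw [hj1]; exact Nat.mul_div_cancel _ hm0
      have hmod : (j + 1) % m = 0 := by rw [hj1]; exact Nat.mul_mod_left _ m
      have hval : φ' (j + 1) = ψ (i + 1) 0 := by
        simp only [hφ'def, hdiv, hmod, Nat.min_eq_left (Nat.zero_le _)]
      have hval0 : φ' j = ψ i (min r (n i)) := rfl
      rw [hval, hval0, h0 (i + 1)]
      rcases Nat.lt_or_ge i L.N with hiN | hiN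
      · -- n i ≤ m - 1 = r
        have hr : n i ≤ r := by
          have := hnm i hiN; omega
        rw [Nat.min_eq_right hr, htop i (n i) le_rfl]
        constructor
        · exact le_rfl
        · simp only [hausdorffDist_self_zero]; exact he'.le
      · -- all C
        rw [hCblock i hiN, L.top (i + 1) (hiN.trans (Nat.le_succ i))]
        constructor
        · exact le_rfl
        · simp only [hausdorffDist_self_zero]; exact he'.le
  refine ⟨⟨L.N * m, Nat.mul_pos L.hN hm0, φ',
    monotone_nat_of_le_succ (fun j => (hstep j).1), ?_, ?_, ?_, ?_, ?_,
    fun j => (hstep j).2⟩, m, hm0, rfl, hext⟩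
  · -- zero
    have := hext 0
    rwa [Nat.zero_mul, L.zero] at this
  · -- top
    intro j hj
    have hiN : L.N ≤ j / m := (Nat.le_div_iff_mul_le hm0).mpr hj
    exact hCblock (j / m) hiN _
  · exact fun j => (hprops _ _).1
  · exact fun j => (hprops _ _).2.1
  · exact fun j => ((hprops _ _).2.2.2).trans (L.sub _)
/-- The key construction: a continuous path in the hyperspace of nonempty compact subsets
from the singleton `{z}` to a continuum `C` containing `z`, staying inside `C`. -/
lemma exists_hyperpath {C : Set X} (hC : IsCompact C) (hCc : IsPreconnected C)
    {z : X} (hz : z ∈ C) :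
    ∃ F : ℝ → NonemptyCompacts X, Continuous F ∧ (F 0 : Set X) = {z} ∧ (F 1 : Set X) = C ∧
      ∀ t, (F t : Set X) ⊆ C := by
  classical
  set R : ℝ := hausdorffDist ({z} : Set X) C with hRdef
  have hR0 : 0 ≤ R := hausdorffDist_nonneg
  set es : ℕ → ℝ := fun k => (R + 1) * (1 / 2) ^ k with hesdef
  have hes0 : ∀ k, 0 < es k := fun k => mul_pos (by linarith) (pow_pos (by norm_num) k)
  have hzsub : ({z} : Set X) ⊆ C := singleton_subset_iff.mpr hz
  have base : Chain z C (es 0) :=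
    { N := 1, hN := one_pos
      φ := fun i => if i = 0 then {z} else C
      mono := by
        apply monotone_nat_of_le_succ
        intro i
        rcases Nat.eq_zero_or_pos i with rfl | h
        · simp [hzsub]
        · have h1 : i ≠ 0 := Nat.pos_iff_ne_zero.mp h
          simp [h1]
      zero := if_pos rfl
      top := fun i hi => if_neg (by omega)
      cpt := fun i => by
        split_ifs
        · exact isCompact_singleton
        · exact hC
      conn := fun i => by
        split_ifs
        · exact isPreconnected_singleton
        · exact hCc
      sub := fun i => by
        split_ifs
        · exact hzsub
        · exact le_rfl
      gap := fun i => by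
        rcases Nat.eq_zero_or_pos i with rfl | h
        · rw [if_pos rfl, if_neg Nat.one_ne_zero]
          show hausdorffDist ({z} : Set X) C ≤ (R + 1) * (1 / 2 : ℝ) ^ 0
          rw [← hRdef, pow_zero, mul_one]
          linarith
        · have h1 : i ≠ 0 := Nat.pos_iff_ne_zero.mp h
          rw [if_neg h1, if_neg (Nat.succ_ne_zero i)]
          simp only [hausdorffDist_self_zero]
          exact (hes0 0).le }
  have step : ∀ k (L : Chain z C (es k)), ∃ p : Chain z C (es (k + 1)) × ℕ,
      0 < p.2 ∧ p.1.N = L.N * p.2 ∧ ∀ i, p.1.φ (i * p.2) = L.φ i := by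
    intro k L
    obtain ⟨L', m, h1, h2, h3⟩ := L.refine (hes0 (k + 1))
    exact ⟨(L', m), h1, h2, h3⟩
  set T : ∀ k, Chain z C (es k) := fun k =>
    Nat.rec (motive := fun k => Chain z C (es k)) base (fun k L => (step k L).choose.1) k
    with hTdef
  have hTsucc : ∀ k, T (k + 1) = (step k (T k)).choose.1 := fun k => rfl
  have hTstep : ∀ k, ∃ m : ℕ, 0 < m ∧ (T (k + 1)).N = (T k).N * m ∧
      ∀ i, (T (k + 1)).φ (i * m) = (T k).φ i := by
    intro k
    obtain ⟨h1, h2, h3⟩ := (step k (T k)).choose_spec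
    exact ⟨(step k (T k)).choose.2, h1, by rw [hTsucc k]; exact h2,
      fun i => by rw [hTsucc k]; exact h3 i⟩
  have hTnest : ∀ k j, ∃ M : ℕ, 0 < M ∧ (T (k + j)).N = (T k).N * M ∧
      ∀ i, (T (k + j)).φ (i * M) = (T k).φ i := by
    intro k j
    induction j with
    | zero => exact ⟨1, one_pos, by simp, fun i => by simp⟩
    | succ j ih =>
      obtain ⟨M, hM, hNM, hφM⟩ := ih
      obtain ⟨m, hm, hNm, hφm⟩ := hTstep (k + j)
      refine ⟨M * m, Nat.mul_pos hM hm, ?_, fun i => ?_⟩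
      · rw [show k + (j + 1) = (k + j) + 1 from rfl, hNm, hNM, Nat.mul_assoc]
      · rw [show k + (j + 1) = (k + j) + 1 from rfl, show i * (M * m) = (i * M) * m by ring,
          hφm, hφM]
  set Nn : ℕ → ℕ := fun k => (T k).N with hNndef
  have hNn0 : ∀ k, 0 < Nn k := fun k => (T k).hN
  have hNn0' : ∀ k, (0 : ℝ) < (Nn k : ℝ) := fun k => by exact_mod_cast hNn0 k
  set idx : ℕ → ℝ → ℕ := fun k t => ⌊max t 0 * (Nn k : ℝ)⌋₊ with hidxdef
  have hidxmono : ∀ (k : ℕ) {u v : ℝ}, u ≤ v → idx k u ≤ idx k v := by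
    intro k u v huv
    exact Nat.floor_mono (mul_le_mul_of_nonneg_right (max_le_max huv le_rfl) (Nat.cast_nonneg _))
  set f : ℝ → Set X := fun t => closure (⋃ k, (T k).φ (idx k t)) with hfdef
  have hnest_idx : ∀ k j (t : ℝ), (T k).φ (idx k t) ⊆ (T (k + j)).φ (idx (k + j) t) := by
    intro k j t
    obtain ⟨M, hM, hNM, hφM⟩ := hTnest k j
    rw [← hφM (idx k t)]
    apply (T (k + j)).mono
    apply Nat.le_floor
    push_cast
    have h1 : ((idx k t : ℕ) : ℝ) ≤ max t 0 * (Nn k : ℝ) :=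
      Nat.floor_le (mul_nonneg (le_max_right t 0) (Nat.cast_nonneg _))
    have h2 : ((Nn (k + j) : ℕ) : ℝ) = (Nn k : ℝ) * (M : ℝ) := by
      have : Nn (k + j) = Nn k * M := hNM
      exact_mod_cast congrArg (Nat.cast : ℕ → ℝ) this
    calc ((idx k t : ℕ) : ℝ) * (M : ℝ) ≤ (max t 0 * (Nn k : ℝ)) * (M : ℝ) :=
        mul_le_mul_of_nonneg_right h1 (Nat.cast_nonneg M)
      _ = max t 0 * ((Nn (k + j) : ℕ) : ℝ) := by rw [h2]; ring
  have hlev : ∀ {k k' : ℕ}, k ≤ k' → ∀ t : ℝ, (T k).φ (idx k t) ⊆ (T k').φ (idx k' t) := by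
    intro k k' hkk' t
    obtain ⟨j, rfl⟩ := Nat.exists_eq_add_of_le hkk'
    exact hnest_idx k j t
  have hfz : ∀ t, z ∈ f t := fun t => subset_closure (mem_iUnion.mpr ⟨0, (T 0).mem_z _⟩)
  have hfsub : ∀ t, f t ⊆ C := fun t =>
    closure_minimal (iUnion_subset fun k => (T k).sub _) hC.isClosed
  have hfcpt : ∀ t, IsCompact (f t) := fun t => hC.of_isClosed_subset isClosed_closure (hfsub t)
  have hf0 : f 0 = {z} := by
    have hk0 : ∀ k, (T k).φ (idx k 0) = {z} := by
      intro k
      have h1 : idx k 0 = 0 := by simp [hidxdef]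
      rw [h1, (T k).zero]
    show closure (⋃ k, (T k).φ (idx k 0)) = {z}
    simp only [hk0, iUnion_const, closure_singleton]
  have hf1 : f 1 = C := by
    have hk1 : ∀ k, (T k).φ (idx k 1) = C := by
      intro k
      have h1 : idx k 1 = Nn k := by
        simp [hidxdef, max_eq_left (zero_le_one : (0:ℝ) ≤ 1)]
      rw [h1]
      exact (T k).top _ le_rfl
    show closure (⋃ k, (T k).φ (idx k 1)) = C
    simp only [hk1, iUnion_const]
    exact hC.isClosed.closure_eq
  have hfmono : ∀ {u v : ℝ}, u ≤ v → f u ⊆ f v := by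
    intro u v huv
    exact closure_mono (iUnion_mono fun k => (T k).mono (hidxmono k huv))
  have hedist_fin : ∀ k a b, EMetric.hausdorffEdist ((T k).φ a) ((T k).φ b) ≠ ⊤ := fun k a b =>
    hausdorffEdist_ne_top_of_nonempty_of_bounded ((T k).ne a) ((T k).ne b)
      ((T k).cpt a).isBounded ((T k).cpt b).isBounded
  have hgap2 : ∀ k a, hausdorffDist ((T k).φ a) ((T k).φ (a + 2)) ≤ 2 * es k := by
    intro k a
    calc hausdorffDist ((T k).φ a) ((T k).φ (a + 2))
        ≤ hausdorffDist ((T k).φ a) ((T k).φ (a + 1)) +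
          hausdorffDist ((T k).φ (a + 1)) ((T k).φ (a + 2)) :=
          hausdorffDist_triangle (hedist_fin k a (a + 1))
      _ ≤ es k + es k := add_le_add ((T k).gap a) ((T k).gap (a + 1))
      _ = 2 * es k := by ring
  have hsand : ∀ (k : ℕ) (u v : ℝ), u ≤ v → (v - u) * (Nn k : ℝ) < 1 →
      hausdorffDist (f u) (f v) ≤ 2 * es k := by
    intro k u v huv hlt
    have hvu0 : (0 : ℝ) ≤ v - u := by linarith
    have hmaxle : max v 0 ≤ max u 0 + (v - u) := by
      rcases le_total v 0 with h | h
      · rw [max_eq_right h]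
        have := le_max_right u 0
        linarith
      · rw [max_eq_left h]
        have := le_max_left u 0
        linarith
    have hkeyk : max v 0 * (Nn k : ℝ) < (idx k u : ℝ) + 2 := by
      have h1 : max u 0 * (Nn k : ℝ) < (idx k u : ℝ) + 1 := Nat.lt_floor_add_one _
      have h2 : max v 0 * (Nn k : ℝ) ≤ max u 0 * (Nn k : ℝ) + (v - u) * (Nn k : ℝ) := by
        calc max v 0 * (Nn k : ℝ) ≤ (max u 0 + (v - u)) * (Nn k : ℝ) :=
            mul_le_mul_of_nonneg_right hmaxle (Nat.cast_nonneg _)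
          _ = max u 0 * (Nn k : ℝ) + (v - u) * (Nn k : ℝ) := by ring
      linarith
    set Q : Set X := (T k).φ (idx k u + 2) with hQdef
    have hQsub : ∀ k', (T k').φ (idx k' v) ⊆ Q := by
      intro k'
      rcases le_total k' k with h | h
      · refine (hlev h v).trans ((T k).mono ?_)
        have : idx k v < idx k u + 2 := by
          rw [hidxdef]
          apply (Nat.floor_lt (mul_nonneg (le_max_right v 0) (Nat.cast_nonneg _))).mpr
          push_cast
          exact hkeyk
        omega
      · obtain ⟨j, rfl⟩ := Nat.exists_eq_add_of_le h
        obtain ⟨M, hM, hNM, hφM⟩ := hTnest k j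
        rw [hQdef, ← hφM (idx k u + 2)]
        apply (T (k + j)).mono
        have hcast : ((Nn (k + j) : ℕ) : ℝ) = (Nn k : ℝ) * (M : ℝ) := by
          have hNM' : Nn (k + j) = Nn k * M := hNM
          rw [hNM', Nat.cast_mul]
        have hM' : (0 : ℝ) < (M : ℝ) := by exact_mod_cast hM
        have hlt2 : max v 0 * ((Nn (k + j) : ℕ) : ℝ) < ((idx k u : ℝ) + 2) * (M : ℝ) := by
          rw [hcast, ← mul_assoc]
          exact mul_lt_mul_of_pos_right hkeyk hM'
        have hfl : idx (k + j) v < (idx k u + 2) * M := by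
          apply (Nat.floor_lt (mul_nonneg (le_max_right v 0) (Nat.cast_nonneg _))).mpr
          push_cast
          push_cast at hlt2
          exact hlt2
        exact le_of_lt hfl
    have hPfu : (T k).φ (idx k u) ⊆ f u := fun p hp => subset_closure (mem_iUnion.mpr ⟨k, hp⟩)
    have hfvQ : f v ⊆ Q := closure_minimal (iUnion_subset hQsub) ((T k).cpt _).isClosed
    have hfufv : f u ⊆ f v := hfmono huv
    apply hausdorffDist_le_of_infDist (by have := hes0 k; linarith)
    · intro p hp
      rw [infDist_zero_of_mem (hfufv hp)]
      have := hes0 k; linarith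
    · intro p hp
      have h1 : infDist p (f u) ≤ infDist p ((T k).φ (idx k u)) :=
        infDist_le_infDist_of_subset hPfu ((T k).ne _)
      have h2 : infDist p ((T k).φ (idx k u)) ≤ hausdorffDist Q ((T k).φ (idx k u)) :=
        infDist_le_hausdorffDist_of_mem (hfvQ hp) (hedist_fin k _ _)
      rw [hausdorffDist_comm] at h2
      exact h1.trans (h2.trans (hgap2 k _))
  set F : ℝ → NonemptyCompacts X := fun t => ⟨⟨f t, hfcpt t⟩, ⟨z, hfz t⟩⟩ with hFdef
  have hFcont : Continuous F := by
    rw [Metric.continuous_iff]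
    intro b ε hε
    have hden : (0 : ℝ) < 2 * (R + 1) := by linarith
    obtain ⟨k, hk⟩ := exists_pow_lt_of_lt_one (div_pos hε hden) (by norm_num : (1 : ℝ) / 2 < 1)
    have hkes : 2 * es k < ε := by
      have h2 : 2 * (R + 1) * ((1 / 2 : ℝ) ^ k) < 2 * (R + 1) * (ε / (2 * (R + 1))) :=
        mul_lt_mul_of_pos_left hk hden
      rw [mul_div_cancel₀ _ (ne_of_gt hden)] at h2
      calc 2 * es k = 2 * (R + 1) * ((1 / 2 : ℝ) ^ k) := by rw [hesdef]; ring
        _ < ε := h2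
    refine ⟨1 / (2 * (Nn k : ℝ)), by have := hNn0' k; positivity, fun a hab => ?_⟩
    have hd : dist (F a) (F b) = hausdorffDist (f a) (f b) := NonemptyCompacts.dist_eq
    rw [hd]
    have habs : |a - b| < 1 / (2 * (Nn k : ℝ)) := by
      rw [← Real.dist_eq]
      exact hab
    have hbound : ∀ u v : ℝ, u ≤ v → |u - v| < 1 / (2 * (Nn k : ℝ)) →
        hausdorffDist (f u) (f v) ≤ 2 * es k := by
      intro u v huv habs'
      apply hsand k u v huv
      have h1 : v - u < 1 / (2 * (Nn k : ℝ)) := by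
        rw [abs_sub_comm, abs_of_nonneg (by linarith : (0:ℝ) ≤ v - u)] at habs'
        exact habs'
      have h2 : (1 / (2 * (Nn k : ℝ))) * (Nn k : ℝ) < 1 := by
        have h := hNn0' k
        rw [div_mul_eq_mul_div, one_mul, div_lt_one (by linarith)]
        linarith
      calc (v - u) * (Nn k : ℝ) < (1 / (2 * (Nn k : ℝ))) * (Nn k : ℝ) :=
          mul_lt_mul_of_pos_right h1 (hNn0' k)
        _ < 1 := h2
    rcases le_total a b with h | h
    · exact lt_of_le_of_lt (hbound a b h habs) hkes
    · rw [hausdorffDist_comm]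
      exact lt_of_le_of_lt (hbound b a h (by rwa [abs_sub_comm])) hkes
  exact ⟨F, hFcont, hf0, hf1, hfsub⟩
lemma hd_union_le {C A B : Set X} (hA : A.Nonempty) (hB : B.Nonempty)
    (bA : Bornology.IsBounded A) (bB : Bornology.IsBounded B) :
    hausdorffDist (C ∪ A) (C ∪ B) ≤ hausdorffDist A B := by
  have fin : EMetric.hausdorffEdist A B ≠ ⊤ :=
    hausdorffEdist_ne_top_of_nonempty_of_bounded hA hB bA bB
  have fin' : EMetric.hausdorffEdist B A ≠ ⊤ := 
    hausdorffEdist_ne_top_of_nonempty_of_bounded hB hA bB bA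
  apply hausdorffDist_le_of_infDist hausdorffDist_nonneg
  · rintro p (hp | hp)
    · have h0 : infDist p (C ∪ B) = 0 := infDist_zero_of_mem (mem_union_left B hp)
      rw [h0]
      exact hausdorffDist_nonneg
    · refine le_trans (infDist_le_infDist_of_subset subset_union_right hB) ?_
      exact infDist_le_hausdorffDist_of_mem hp fin
  · rintro p (hp | hp)
    · have h0 : infDist p (C ∪ A) = 0 := infDist_zero_of_mem (mem_union_left A hp)
      rw [h0]
      exact hausdorffDist_nonneg
    · refine le_trans (infDist_le_infDist_of_subset subset_union_right hA) ?_
      rw [hausdorffDist_comm]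
      exact infDist_le_hausdorffDist_of_mem hp fin'

end BlockProof

theorem subcontinuum_disjoint_blocked (x y : X) (C : Set X)
    (hCc : IsCompact C) (hCconn : IsConnected C)
    (hyC : y ∈ C) (hy : y ∉ BlockedSet x) (hx : x ∉ C) :
    C ∩ BlockedSet x = ∅ := by
  classical
  rw [Set.eq_empty_iff_forall_notMem]
  rintro z ⟨hzC, hzB⟩
  have hzB' : Blocks ({x} : Set X) ({z} : Set X) := hzB
  rw [BlockedSet, Set.mem_setOf_eq, Blocks] at hy
  push_neg at hy
  obtain ⟨γ, hγc, hγ0, hγ1, hγav⟩ := hy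
  -- hγav : ∀ t, t < 1 → ¬((γ t : Set X) ∩ {x}).Nonempty
  obtain ⟨F, hFcont, hF0, hF1, hFsub⟩ :=
    BlockProof.exists_hyperpath hCc hCconn.isPreconnected hzC
  -- the "union with C" map
  set u : NonemptyCompacts X → NonemptyCompacts X := fun K =>
    ⟨⟨C ∪ (K : Set X), hCc.union K.isCompact⟩, ⟨y, Or.inl hyC⟩⟩ with hudef
  have hulip : LipschitzWith 1 u := by
    apply LipschitzWith.of_dist_le_mul
    intro K K'
    rw [NNReal.coe_one, one_mul, NonemptyCompacts.dist_eq, NonemptyCompacts.dist_eq]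
    exact BlockProof.hd_union_le K.nonempty K'.nonempty
      K.isCompact.isBounded K'.isCompact.isBounded
  set δ : unitInterval → NonemptyCompacts X := fun t =>
    if (t : ℝ) ≤ 1 / 2 then F (2 * (t : ℝ))
    else u (γ (Set.projIcc 0 1 zero_le_one (2 * (t : ℝ) - 1))) with hδdef
  have hδcont : Continuous δ := by
    apply Continuous.if_le
    · exact hFcont.comp (continuous_const.mul continuous_subtype_val)
    · exact (hulip.continuous).comp (hγc.comp (continuous_projIcc.comp
        ((continuous_const.mul continuous_subtype_val).sub continuous_const)))
    · exact continuous_subtype_val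
    · exact continuous_const
    · intro t ht
      have h1 : (2 : ℝ) * (t : ℝ) = 1 := by rw [ht]; norm_num
      have h2 : (2 : ℝ) * (t : ℝ) - 1 = 0 := by rw [h1]; norm_num
      apply NonemptyCompacts.ext
      show (F (2 * (t : ℝ)) : Set X) = C ∪ (γ (Set.projIcc 0 1 zero_le_one (2 * (t : ℝ) - 1)) : Set X)
      rw [h2, h1, hF1]
      have hproj : Set.projIcc (0:ℝ) 1 zero_le_one 0 = (0 : unitInterval) := by
        rw [Set.projIcc_left]
        rfl
      rw [hproj, hγ0]
      rw [Set.union_eq_self_of_subset_right (Set.singleton_subset_iff.mpr hyC)]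
  have hδ0 : (δ 0 : Set X) = ({z} : Set X) := by
    have h0 : ((0 : unitInterval) : ℝ) = 0 := rfl
    have hc : ((0 : unitInterval) : ℝ) ≤ 1 / 2 := by rw [h0]; norm_num
    simp only [hδdef]
    rw [if_pos hc, h0]
    norm_num
    exact hF0
  have hδ1 : (δ 1 : Set X) = (Set.univ : Set X) := by
    have h1 : ((1 : unitInterval) : ℝ) = 1 := rfl
    have hc : ¬((1 : unitInterval) : ℝ) ≤ 1 / 2 := by rw [h1]; norm_num
    simp only [hδdef]
    rw [if_neg hc, h1]
    have harg : (2 : ℝ) * 1 - 1 = 1 := by norm_num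
    show C ∪ (γ (Set.projIcc 0 1 zero_le_one (2 * 1 - 1)) : Set X) = Set.univ
    rw [harg]
    have hproj : Set.projIcc (0:ℝ) 1 zero_le_one 1 = (1 : unitInterval) := by
      rw [Set.projIcc_right]
      rfl
    rw [hproj, hγ1, Set.union_univ]
  obtain ⟨t, ht1, hne⟩ := hzB' δ hδcont hδ0 hδ1
  obtain ⟨w, hwδ, hwx⟩ := hne
  rw [Set.mem_singleton_iff] at hwx
  subst hwx
  by_cases ht : (t : ℝ) ≤ 1 / 2
  · have : (δ t : Set X) = (F (2 * (t : ℝ)) : Set X) := by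
      simp only [hδdef]
      rw [if_pos ht]
    rw [this] at hwδ
    exact hx (hFsub _ hwδ)
  · have hδt : (δ t : Set X) =
        C ∪ (γ (Set.projIcc 0 1 zero_le_one (2 * (t : ℝ) - 1)) : Set X) := by
      simp only [hδdef]
      rw [if_neg ht]
      rfl
    rw [hδt] at hwδ
    rcases hwδ with hwC | hwγ
    · exact hx hwC
    · have htlt : (t : ℝ) < 1 := ht1
      have hmem : (2 * (t : ℝ) - 1) ∈ Set.Icc (0 : ℝ) 1 := by
        constructor
        · push_neg at ht; linarith
        · linarith
      have hslt : Set.projIcc 0 1 zero_le_one (2 * (t : ℝ) - 1) < 1 := by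
        have hval : (Set.projIcc 0 1 zero_le_one (2 * (t : ℝ) - 1) : ℝ) = 2 * (t : ℝ) - 1 := by
          rw [Set.projIcc_of_mem _ hmem]
        have : (Set.projIcc 0 1 zero_le_one (2 * (t : ℝ) - 1) : ℝ) < 1 := by
          rw [hval]; linarith
        exact this
      have hxmem : w ∈ (γ (Set.projIcc 0 1 zero_le_one (2 * (t : ℝ) - 1)) : Set X) ∩ {w} :=
        ⟨hwγ, rfl⟩
      rw [hγav _ hslt] at hxmem
      exact hxmem
end
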